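/- arXiv:1603.06460 — 9 statements merged into one kernel-verified Lean document; each statement's English description precedes it below -/
import Mathlib

section
/- With the right quotient-set semi-action ⇀ defined by m ⇀ gG₀ = g_{m₀,m} g • m₀, for each m ∈ M and each g ∈ G there exists g₀ ∈ G₀ such that for every coset 𝔤' ∈ G/G₀ we have m ⇀ (g·𝔤') = (m ⇀ gG₀) ⇀ (g₀·𝔤'), where g·𝔤' denotes the left multiplication action of G on G/G₀. -/
open MulAction

theorem MulAction.eq_smul_ofQuotientStabilizer {G M : Type*} [Group G] [MulAction G M]
    {m₀ : M} {gg : M → G} {ρ : M → G ⧸ stabilizer G m₀ → M}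
    (hρ : ∀ (m : M) (g : G), ρ m (g : G ⧸ stabilizer G m₀) = (gg m * g) • m₀)
    (m : M) (𝔤 : G ⧸ stabilizer G m₀) :
    ρ m 𝔤 = gg m • ofQuotientStabilizer G m₀ 𝔤 := by
  induction 𝔤 using QuotientGroup.induction_on with
  | H g => rw [hρ, mul_smul, ofQuotientStabilizer_mk]

theorem stmt1_general {G M : Type*} [Group G] [MulAction G M]
    (m₀ : M) (gg : M → G) (hgg : ∀ m, gg m • m₀ = m)
    (ρ : M → G ⧸ MulAction.stabilizer G m₀ → M)
    (hρ : ∀ (m : M) (g : G), ρ m (g : G ⧸ MulAction.stabilizer G m₀) = (gg m * g) • m₀) :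
    ∀ (m : M) (g : G), ∃ g₀ ∈ MulAction.stabilizer G m₀,
      ∀ 𝔤' : G ⧸ MulAction.stabilizer G m₀,
        ρ m (g • 𝔤') = ρ (ρ m (g : G ⧸ MulAction.stabilizer G m₀)) (g₀ • 𝔤') := by
  intro m g
  set m' := ρ m (g : G ⧸ stabilizer G m₀)
  refine ⟨(gg m')⁻¹ * (gg m * g), ?_, fun 𝔤' => ?_⟩
  · rw [mem_stabilizer_iff, mul_smul, ← hρ, inv_smul_eq_iff, hgg]
  · simp only [eq_smul_ofQuotientStabilizer hρ, ofQuotientStabilizer_smul, mul_smul,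
      smul_inv_smul]

theorem stmt1 {G M : Type*} [Group G] [MulAction G M]
    (htrans : ∀ m mp : M, ∃ g : G, g • m = mp)
    (m₀ : M) (gg : M → G) (hgg : ∀ m, gg m • m₀ = m)
    (ρ : M → G ⧸ MulAction.stabilizer G m₀ → M)
    (hρ : ∀ (m : M) (g : G), ρ m (g : G ⧸ MulAction.stabilizer G m₀) = (gg m * g) • m₀) :
    ∀ (m : M) (g : G), ∃ g₀ ∈ MulAction.stabilizer G m₀,
      ∀ 𝔤' : G ⧸ MulAction.stabilizer G m₀,
        ρ m (g • 𝔤') = ρ (ρ m (g : G ⧸ MulAction.stabilizer G m₀)) (g₀ • 𝔤') :=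
  stmt1_general m₀ gg hgg ρ hρ
end

section
/- Let m ∈ M, and let E, E' be subsets of G/G₀. Then there exists a subset E'' of G/G₀ with (m ⇀ E) ⇀ E' = m ⇀ E'' (where A ⇀ S := {a ⇀ s : a ∈ A, s ∈ S}); moreover if G₀ ∈ E ∩ E' then G₀ ∈ E'', and if E and E' are finite then |E''| ≤ |E| · |E'|. -/
/-! Since the points `g_{m₀,m'} • m₀` exhaust `M`, the map `m ⇀ · : G/G₀ → M`, which is the orbit
map `gG₀ ↦ g • m₀` followed by translation by `g_{m₀,m}`, is a bijection. Hence every set of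
points, in particular `(m ⇀ E) ⇀ E'`, is `m ⇀ E''` for its preimage `E''`, which has the same
cardinality; and `m ⇀ G₀ = m`, so `G₀ ∈ E ∩ E'` puts `m = m ⇀ G₀` into `(m ⇀ E) ⇀ E'`. -/

open Set

theorem Set.ncard_image2_le {α β γ : Type*} (f : α → β → γ) {s : Set α} {t : Set β}
    (hs : s.Finite) (ht : t.Finite) : (image2 f s t).ncard ≤ s.ncard * t.ncard := by
  rw [← image_uncurry_prod, ← ncard_prod]
  exact ncard_image_le (hs.prod ht)

namespace MulAction

variable {G M : Type*} [Group G] [MulAction G M] {m₀ : M}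

theorem bijective_of_eq_smul_mk {ρ : G ⧸ stabilizer G m₀ → M} (h : G)
    (hρ : ∀ g : G, ρ g = (h * g) • m₀) (hsurj : ∀ p : M, ∃ g : G, g • m₀ = p) :
    Function.Bijective ρ := by
  have hρ_eq : ρ = (h • ·) ∘ ofQuotientStabilizer G m₀ := by
    funext q
    induction q using QuotientGroup.induction_on with
    | H g => rw [hρ, Function.comp_apply, ofQuotientStabilizer_mk, mul_smul]
  refine ⟨hρ_eq ▸ (MulAction.injective h).comp (injective_ofQuotientStabilizer G m₀),
    fun p => ?_⟩
  obtain ⟨g, hg⟩ := hsurj (h⁻¹ • p)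
  exact ⟨g, by rw [hρ, mul_smul, hg, smul_inv_smul]⟩

end MulAction

theorem stmt5_general {G M : Type*} [Group G] [MulAction G M]
    (m₀ : M) (gg : M → G) (hgg : ∀ m, gg m • m₀ = m)
    (ρ : M → G ⧸ MulAction.stabilizer G m₀ → M)
    (hρ : ∀ (m : M) (g : G), ρ m (g : G ⧸ MulAction.stabilizer G m₀) = (gg m * g) • m₀)
    (m : M) (E E' : Set (G ⧸ MulAction.stabilizer G m₀)) :
    ∃ E'' : Set (G ⧸ MulAction.stabilizer G m₀),
      Set.image2 ρ (ρ m '' E) E' = ρ m '' E'' ∧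
      (((1 : G) : G ⧸ MulAction.stabilizer G m₀) ∈ E ∩ E' →
        ((1 : G) : G ⧸ MulAction.stabilizer G m₀) ∈ E'') ∧
      (E.Finite → E'.Finite → E''.Finite ∧ E''.ncard ≤ E.ncard * E'.ncard) := by
  have hbij : (ρ m).Bijective :=
    MulAction.bijective_of_eq_smul_mk (gg m) (hρ m) fun p => ⟨gg p, hgg p⟩
  have hρ_one : ρ m ((1 : G) : G ⧸ MulAction.stabilizer G m₀) = m := by rw [hρ, mul_one, hgg]
  refine ⟨ρ m ⁻¹' image2 ρ (ρ m '' E) E', (image_preimage_eq _ hbij.surjective).symm,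
    fun ⟨h1, h2⟩ => ?_, fun hE hE' => ⟨?_, ?_⟩⟩
  · rw [mem_preimage, hρ_one]
    exact ⟨m, ⟨_, h1, hρ_one⟩, _, h2, hρ_one⟩
  · exact ((hE.image _).image2 _ hE').preimage hbij.injective.injOn
  · calc (ρ m ⁻¹' image2 ρ (ρ m '' E) E').ncard = (image2 ρ (ρ m '' E) E').ncard :=
          ncard_preimage_of_injective_subset_range hbij.injective
            (hbij.surjective.range_eq ▸ subset_univ _)
      _ ≤ (ρ m '' E).ncard * E'.ncard := ncard_image2_le _ (hE.image _) hE'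
      _ ≤ E.ncard * E'.ncard := Nat.mul_le_mul_right _ (ncard_image_le hE)

theorem stmt5 {G M : Type*} [Group G] [MulAction G M]
    (htrans : ∀ m mp : M, ∃ g : G, g • m = mp)
    (m₀ : M) (gg : M → G) (hgg : ∀ m, gg m • m₀ = m)
    (ρ : M → G ⧸ MulAction.stabilizer G m₀ → M)
    (hρ : ∀ (m : M) (g : G), ρ m (g : G ⧸ MulAction.stabilizer G m₀) = (gg m * g) • m₀)
    (m : M) (E E' : Set (G ⧸ MulAction.stabilizer G m₀)) :
    ∃ E'' : Set (G ⧸ MulAction.stabilizer G m₀),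
      Set.image2 ρ (ρ m '' E) E' = ρ m '' E'' ∧
      (((1 : G) : G ⧸ MulAction.stabilizer G m₀) ∈ E ∩ E' →
        ((1 : G) : G ⧸ MulAction.stabilizer G m₀) ∈ E'') ∧
      (E.Finite → E'.Finite → E''.Finite ∧ E''.ncard ≤ E.ncard * E'.ncard) :=
  stmt5_general m₀ gg hgg ρ hρ m E E'
end

section
/- Let G₀ be finite, let F, F' be finite subsets of M, and let 𝔤, 𝔤' ∈ G/G₀. Then |(⇀𝔤)⁻¹(F) \ (⇀𝔤')⁻¹(F')| ≤ |G₀|² · max_{g ∈ 𝔤} |F \ (⇀ g⁻¹·𝔤')⁻¹(F')|, where (⇀𝔤)⁻¹(F) denotes the preimage of F under m ↦ m ⇀ 𝔤. -/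
/-!
Fix a representative `g₀` of `𝔤`. For each `m`, `gg (m ⇀ 𝔤) = gg m * (g₀ * t)` for some `t ∈ G₀`,
and then `(m ⇀ 𝔤) ⇀ (g₀ * t)⁻¹ • 𝔤' = m ⇀ 𝔤'`. Hence on each fibre of `m ↦ t` the map
`m ↦ m ⇀ 𝔤` is injective and sends the left-hand set into `F \ (⇀ (g₀ * t)⁻¹ • 𝔤')⁻¹ F'`.
Summing over the `|G₀|` fibres already gives the bound with a single factor `|G₀|`, the witness
being `g₀ * t` for a `t` maximising the right-hand side.
-/

open MulAction

theorem Set.ncard_le_sum_ncard_of_injOn_fibers {α β ι : Type*} [Fintype ι] {S : Set α}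
    {σ : α → ι} {f : α → β} {A : ι → Set β} (hA : ∀ i, (A i).Finite)
    (hmaps : ∀ a ∈ S, f a ∈ A (σ a)) (hinj : ∀ i, InjOn f (S ∩ σ ⁻¹' {i})) :
    S.ncard ≤ ∑ i, (A i).ncard := by
  have hfiber (i : ι) : (S ∩ σ ⁻¹' {i}).ncard ≤ (A i).ncard :=
    Set.ncard_le_ncard_of_injOn f (fun a ⟨ha, hσ⟩ => hσ ▸ hmaps a ha) (hinj i) (hA i)
  calc S.ncard = (⋃ i, S ∩ σ ⁻¹' {i}).ncard := by
        rw [← Set.inter_iUnion, ← Set.preimage_iUnion, Set.iUnion_of_singleton, Set.preimage_univ,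
          Set.inter_univ]
    _ ≤ ∑ i, (S ∩ σ ⁻¹' {i}).ncard := Set.ncard_iUnion_le_of_fintype _
    _ ≤ ∑ i, (A i).ncard := Finset.sum_le_sum fun i _ => hfiber i

theorem Set.exists_ncard_le_card_mul_of_injOn_fibers {α β ι : Type*} [Finite ι] [Nonempty ι]
    {S : Set α} {σ : α → ι} {f : α → β} {A : ι → Set β} (hA : ∀ i, (A i).Finite)
    (hmaps : ∀ a ∈ S, f a ∈ A (σ a)) (hinj : ∀ i, InjOn f (S ∩ σ ⁻¹' {i})) :
    ∃ i, S.ncard ≤ Nat.card ι * (A i).ncard := by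
  have := Fintype.ofFinite ι
  obtain ⟨i, hi⟩ := Finite.exists_max fun i => (A i).ncard
  refine ⟨i, (Set.ncard_le_sum_ncard_of_injOn_fibers hA hmaps hinj).trans ?_⟩
  simpa [Nat.card_eq_fintype_card] using Finset.sum_le_card_nsmul Finset.univ _ _ fun j _ => hi j

theorem MulAction.inv_mul_mem_stabilizer_of_smul_eq {G M : Type*} [Group G] [MulAction G M]
    {m : M} {a b : G} (h : a • m = b • m) : a⁻¹ * b ∈ stabilizer G m := by
  rw [mem_stabilizer_iff, mul_smul, ← h, inv_smul_smul]

section Transversal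

variable {G M : Type*} [Group G] [MulAction G M] {m₀ : M} {gg : M → G}
  {ρ : M → G ⧸ stabilizer G m₀ → M}

theorem exists_gg_rho_eq_mul_stabilizer (hgg : ∀ m, gg m • m₀ = m)
    (hρ : ∀ (m : M) (g : G), ρ m (g : G ⧸ stabilizer G m₀) = (gg m * g) • m₀) (m : M) (g : G) :
    ∃ t : stabilizer G m₀, gg (ρ m g) = gg m * (g * t) :=
  ⟨⟨_, inv_mul_mem_stabilizer_of_smul_eq (a := gg m * g) (b := gg (ρ m g)) (by rw [hgg, hρ])⟩, by
    rw [← mul_assoc, mul_inv_cancel_left]⟩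

theorem eq_of_gg_eq_mul (hgg : ∀ m, gg m • m₀ = m) {m m' n : M} {g : G}
    (h : gg n = gg m * g) (h' : gg n = gg m' * g) : m = m' := by
  rw [← hgg m, ← hgg m', mul_right_cancel (h.symm.trans h')]

theorem rho_inv_smul_eq (hρ : ∀ (m : M) (g : G), ρ m (g : G ⧸ stabilizer G m₀) = (gg m * g) • m₀)
    {m n : M} {g : G} (h : gg n = gg m * g) (𝔥 : G ⧸ stabilizer G m₀) :
    ρ n (g⁻¹ • 𝔥) = ρ m 𝔥 := by
  induction 𝔥 using QuotientGroup.induction_on with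
  | H g' =>
    change ρ n ((g⁻¹ * g' : G) : G ⧸ stabilizer G m₀) = _
    rw [hρ, hρ, h, mul_assoc, mul_inv_cancel_left]

end Transversal

theorem stmt6_general {G M : Type*} [Group G] [MulAction G M]
    (m₀ : M) (gg : M → G) (hgg : ∀ m, gg m • m₀ = m)
    (ρ : M → G ⧸ MulAction.stabilizer G m₀ → M)
    (hρ : ∀ (m : M) (g : G), ρ m (g : G ⧸ MulAction.stabilizer G m₀) = (gg m * g) • m₀)
    [Finite (MulAction.stabilizer G m₀)]
    (F F' : Set M) (hF : F.Finite)
    (𝔤 𝔤' : G ⧸ MulAction.stabilizer G m₀) :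
    ∃ g : G, (g : G ⧸ MulAction.stabilizer G m₀) = 𝔤 ∧
      ((fun m => ρ m 𝔤) ⁻¹' F \ (fun m => ρ m 𝔤') ⁻¹' F').ncard ≤
        Nat.card (MulAction.stabilizer G m₀) ^ 2 *
          (F \ (fun m => ρ m (g⁻¹ • 𝔤')) ⁻¹' F').ncard := by
  obtain ⟨g₀, rfl⟩ := QuotientGroup.mk_surjective 𝔤
  choose σ hσ using exists_gg_rho_eq_mul_stabilizer hgg hρ (g := g₀)
  have hmaps : ∀ m ∈ (fun m => ρ m g₀) ⁻¹' F \ (fun m => ρ m 𝔤') ⁻¹' F',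
      ρ m g₀ ∈ F \ (fun n => ρ n ((g₀ * σ m)⁻¹ • 𝔤')) ⁻¹' F' := by
    rintro m ⟨hmF, hmF'⟩
    exact ⟨hmF, by simpa only [Set.mem_preimage, rho_inv_smul_eq hρ (hσ m)] using hmF'⟩
  have hinj (t : stabilizer G m₀) : Set.InjOn (fun m => ρ m g₀)
      ((fun m => ρ m g₀) ⁻¹' F \ (fun m => ρ m 𝔤') ⁻¹' F' ∩ σ ⁻¹' {t}) := by
    rintro m ⟨-, rfl⟩ m' ⟨-, hm'⟩ h
    exact eq_of_gg_eq_mul hgg (hσ m) (by rw [show ρ m g₀ = ρ m' g₀ from h, hσ, hm'.out])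
  obtain ⟨t, ht⟩ := Set.exists_ncard_le_card_mul_of_injOn_fibers
    (A := fun t => F \ (fun n => ρ n ((g₀ * t)⁻¹ • 𝔤')) ⁻¹' F') (σ := σ) (fun _ => hF.sdiff) hmaps hinj
  exact ⟨g₀ * t, QuotientGroup.mk_mul_of_mem g₀ t.2,
    ht.trans (Nat.mul_le_mul_right _ (Nat.le_self_pow two_ne_zero _))⟩

theorem stmt6 {G M : Type*} [Group G] [MulAction G M]
    (htrans : ∀ m mp : M, ∃ g : G, g • m = mp)
    (m₀ : M) (gg : M → G) (hgg : ∀ m, gg m • m₀ = m)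
    (ρ : M → G ⧸ MulAction.stabilizer G m₀ → M)
    (hρ : ∀ (m : M) (g : G), ρ m (g : G ⧸ MulAction.stabilizer G m₀) = (gg m * g) • m₀)
    [Finite (MulAction.stabilizer G m₀)]
    (F F' : Set M) (hF : F.Finite) (hF' : F'.Finite)
    (𝔤 𝔤' : G ⧸ MulAction.stabilizer G m₀) :
    ∃ g : G, (g : G ⧸ MulAction.stabilizer G m₀) = 𝔤 ∧
      ((fun m => ρ m 𝔤) ⁻¹' F \ (fun m => ρ m 𝔤') ⁻¹' F').ncard ≤
        Nat.card (MulAction.stabilizer G m₀) ^ 2 *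
          (F \ (fun m => ρ m (g⁻¹ • 𝔤')) ⁻¹' F').ncard :=
  stmt6_general m₀ gg hgg ρ hρ F F' hF 𝔤 𝔤'
end

section
/- Let G₀ be finite. There exists a finitely additive probability measure μ on the power set of M such that μ(A ⇀ 𝔤) = μ(A) for every 𝔤 ∈ G/G₀ and every A ⊆ M on which m ↦ m ⇀ 𝔤 is injective, if and only if there exists a mean ν on M (a linear, normalised, non-negativity-preserving functional on bounded real functions) such that ν(f ⇀ 𝔤) = ν(f) for all bounded f and all 𝔤 ∈ G/G₀. -/
/-!
A finitely additive probability measure `μ` on `M` integrates bounded functions: take the upper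
integral `f ↦ inf {∑ c_A μ(A) | f ≤ ∑ c_A 1_A}`. It is monotone on step functions because `μ` is
additive on the atoms of any finite family of sets, and it is linear because step functions
approximate bounded functions uniformly, so that the upper integrals of `f` and `-f` add up to `0`.

Write `φ = (· ⇀ 𝔤)` with `𝔤 = gG₀`. Since `m ⇀ 𝔤 = g_{m₀,m} g • m₀`, the point `m` is determined by
`m ⇀ 𝔤` together with `g_{m₀, m ⇀ 𝔤}⁻¹ g_{m₀,m} g`, an element of the finite stabiliser `G₀`.
Hence every set splits into `|G₀|` pieces on which `φ` is injective, and moving a step majorant of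
`f` piece by piece along `φ` gives a step majorant of `f ⇀ 𝔤` with the same `μ`-integral. So the
integral of `f ⇀ 𝔤` is at most that of `f`, and applying this to `-f` gives equality. Conversely,
`μ(A) := ν(1_A)` works because `1_A ⇀ 𝔤 = 1_{A ⇀ 𝔤}` when `φ` is injective on `A`.
-/

open Set MeasureTheory
open scoped BoundedContinuousFunction

section

variable {M : Type*}

noncomputable def toStepFun : (Set M →₀ ℝ) →ₗ[ℝ] M → ℝ :=
  Finsupp.linearCombination ℝ fun A => A.indicator 1

noncomputable def stepIntegral (m : Set M → ℝ) : (Set M →₀ ℝ) →ₗ[ℝ] ℝ :=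
  Finsupp.linearCombination ℝ m

@[simp]
lemma toStepFun_single (A : Set M) (r : ℝ) (x : M) :
    toStepFun (Finsupp.single A r) x = r * A.indicator 1 x := by
  simp [toStepFun]

@[simp]
lemma stepIntegral_single (m : Set M → ℝ) (A : Set M) (r : ℝ) :
    stepIntegral m (Finsupp.single A r) = r * m A := by
  simp [stepIntegral]

lemma stepIntegral_apply (m : Set M → ℝ) (c : Set M →₀ ℝ) :
    stepIntegral m c = ∑ A ∈ c.support, c A * m A := by
  simp [stepIntegral, Finsupp.linearCombination_apply, Finsupp.sum]

section Atoms

open scoped Classical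

lemma toStepFun_apply (c : Set M →₀ ℝ) (x : M) :
    toStepFun c x = ∑ A ∈ c.support with x ∈ A, c A := by
  simp [toStepFun, Finsupp.linearCombination_apply, Finsupp.sum, Set.indicator_apply,
    Finset.sum_filter]

def atom (t T : Finset (Set M)) : Set M := (fun x => {B ∈ t | x ∈ B}) ⁻¹' {T}

variable (m : AddContent ℝ (univ : Set (Set M)))

lemma addContent_eq_sum_atom (t : Finset (Set M)) {A : Set M} (hA : A ∈ t) :
    m A = ∑ T ∈ t.powerset with A ∈ T, m (atom t T) := by
  rw [← addContent_biUnion (f := atom t) (fun _ _ => mem_univ _) (pairwiseDisjoint_fiber _ _)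
    (mem_univ _)]
  congr 1
  ext x
  simp [atom, hA]

lemma stepIntegral_eq_sum_atom (c : Set M →₀ ℝ) :
    stepIntegral m c = ∑ T ∈ c.support.powerset, (∑ A ∈ T, c A) * m (atom c.support T) := by
  simp_rw [stepIntegral_apply, Finset.sum_mul]
  rw [Finset.sum_congr rfl fun A hA => by rw [addContent_eq_sum_atom m _ hA, Finset.mul_sum]]
  refine Finset.sum_comm' fun A T => ?_
  simp only [Finset.mem_filter, Finset.mem_powerset]
  exact ⟨fun ⟨_, hT, hAT⟩ => ⟨hAT, hT⟩, fun ⟨hAT, hT⟩ => ⟨hT hAT, hT, hAT⟩⟩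

variable {m}

lemma stepIntegral_nonneg (hm : ∀ s, 0 ≤ m s) {c : Set M →₀ ℝ} (hc : 0 ≤ toStepFun c) :
    0 ≤ stepIntegral m c := by
  rw [stepIntegral_eq_sum_atom]
  refine Finset.sum_nonneg fun T _ => ?_
  rcases eq_empty_or_nonempty (atom c.support T) with h | ⟨x, hx : _ = T⟩
  · simp [h]
  · have hcx : toStepFun c x = ∑ A ∈ T, c A := by rw [toStepFun_apply, ← hx]
    exact mul_nonneg (hcx ▸ hc x) (hm _)

lemma stepIntegral_mono (hm : ∀ s, 0 ≤ m s) {c d : Set M →₀ ℝ}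
    (h : toStepFun c ≤ toStepFun d) : stepIntegral m c ≤ stepIntegral m d := by
  have := stepIntegral_nonneg hm (c := d - c) (by simpa [map_sub] using h)
  simpa [map_sub] using this

end Atoms

@[simp]
lemma toStepFun_single_univ (r : ℝ) (x : M) : toStepFun (Finsupp.single univ r) x = r := by
  simp

lemma exists_toStepFun_eq {h : M → ℝ} (hh : (range h).Finite) : ∃ c, toStepFun c = h := by
  classical
  refine ⟨∑ r ∈ hh.toFinset, Finsupp.single (h ⁻¹' {r}) r, funext fun x => ?_⟩
  rw [map_sum, Finset.sum_apply, Finset.sum_eq_single (h x)] <;> simp +contextual [eq_comm]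

noncomputable def upperIntegral (m : Set M → ℝ) (f : M → ℝ) : ℝ :=
  sInf (stepIntegral m '' {c | f ≤ toStepFun c})

section UpperIntegral

variable [TopologicalSpace M] {m : AddContent ℝ (univ : Set (Set M))}

lemma exists_toStepFun_le_le_add (f : M →ᵇ ℝ) {ε : ℝ} (hε : 0 < ε) :
    ∃ c, toStepFun c ≤ f ∧ ∀ x, f x ≤ toStepFun c x + ε := by
  have hfin : (range fun x => (⌊f x / ε⌋ : ℝ) * ε).Finite := by
    refine ((finite_Icc ⌊-‖f‖ / ε⌋ ⌊‖f‖ / ε⌋).image fun k : ℤ => (k : ℝ) * ε).subset ?_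
    rintro _ ⟨x, rfl⟩
    have hfx := abs_le.mp (f.norm_coe_le_norm x)
    exact ⟨_, ⟨Int.floor_mono (by gcongr; exact hfx.1), Int.floor_mono (by gcongr; exact hfx.2)⟩,
      rfl⟩
  obtain ⟨c, hc⟩ := exists_toStepFun_eq hfin
  refine ⟨c, fun x => ?_, fun x => ?_⟩ <;> rw [hc]
  · exact (le_div_iff₀ hε).mp (Int.floor_le _)
  · have := (div_lt_iff₀ hε).mp (Int.lt_floor_add_one (f x / ε))
    dsimp only; linarith

lemma upperIntegral_le (hm : ∀ s, 0 ≤ m s) (f : M →ᵇ ℝ) {c : Set M →₀ ℝ}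
    (hc : ⇑f ≤ toStepFun c) : upperIntegral m f ≤ stepIntegral m c := by
  refine csInf_le ⟨-‖f‖ * m univ, ?_⟩ ⟨c, hc, rfl⟩
  rintro _ ⟨d, hd, rfl⟩
  rw [← stepIntegral_single]
  refine stepIntegral_mono hm fun x => ?_
  rw [toStepFun_single_univ]
  exact (neg_le_of_abs_le (f.norm_coe_le_norm x)).trans (hd x)

lemma le_upperIntegral (f : M →ᵇ ℝ) {b : ℝ}
    (h : ∀ c, ⇑f ≤ toStepFun c → b ≤ stepIntegral m c) : b ≤ upperIntegral m f := by
  refine le_csInf ⟨_, Finsupp.single univ ‖f‖, fun x => ?_, rfl⟩ ?_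
  · rw [toStepFun_single_univ]
    exact le_of_abs_le (f.norm_coe_le_norm x)
  · rintro _ ⟨c, hc, rfl⟩
    exact h c hc

lemma stepIntegral_le_upperIntegral (hm : ∀ s, 0 ≤ m s) (f : M →ᵇ ℝ) {c : Set M →₀ ℝ}
    (hc : toStepFun c ≤ ⇑f) : stepIntegral m c ≤ upperIntegral m f :=
  le_upperIntegral f fun _ hd => stepIntegral_mono hm (hc.trans hd)

lemma upperIntegral_add_le (hm : ∀ s, 0 ≤ m s) (f g : M →ᵇ ℝ) :
    upperIntegral m ⇑(f + g) ≤ upperIntegral m f + upperIntegral m g := by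
  suffices upperIntegral m ⇑(f + g) - upperIntegral m g ≤ upperIntegral m f by linarith
  refine le_upperIntegral f fun c hc => ?_
  suffices upperIntegral m ⇑(f + g) - stepIntegral m c ≤ upperIntegral m g by linarith
  refine le_upperIntegral g fun d hd => ?_
  have := upperIntegral_le hm (f + g) (c := c + d) (by simpa using add_le_add hc hd)
  rw [map_add] at this
  linarith

lemma upperIntegral_smul_le (hm : ∀ s, 0 ≤ m s) {a : ℝ} (ha : 0 ≤ a) (f : M →ᵇ ℝ) :
    upperIntegral m ⇑(a • f) ≤ a * upperIntegral m f := by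
  rcases ha.eq_or_lt with rfl | ha
  · simpa using upperIntegral_le hm ((0 : ℝ) • f) (c := 0) (by simp)
  rw [← div_le_iff₀' ha]
  refine le_upperIntegral f fun c hc => ?_
  rw [div_le_iff₀' ha, ← smul_eq_mul, ← map_smul]
  exact upperIntegral_le hm _ fun x => by simpa using mul_le_mul_of_nonneg_left (hc x) ha.le

lemma upperIntegral_add_neg_le (hm : ∀ s, 0 ≤ m s) (f : M →ᵇ ℝ) {ε : ℝ} (hε : 0 < ε) :
    upperIntegral m f + upperIntegral m ⇑(-f) ≤ ε * m univ := by
  obtain ⟨c, hcf, hfc⟩ := exists_toStepFun_le_le_add f hε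
  have hf := upperIntegral_le hm f (c := c + Finsupp.single univ ε) fun x => by simpa using hfc x
  have hnf := upperIntegral_le hm (-f) (c := -c) fun x => by simpa using hcf x
  simp only [map_add, map_neg, stepIntegral_single] at hf hnf
  linarith

lemma upperIntegral_neg (hm : ∀ s, 0 ≤ m s) (f : M →ᵇ ℝ) :
    upperIntegral m ⇑(-f) = -upperIntegral m f := by
  refine le_antisymm ?_ ?_
  · suffices upperIntegral m f + upperIntegral m ⇑(-f) ≤ 0 by linarith
    refine le_of_forall_pos_le_add fun ε hε => ?_
    have hmε : 0 < m univ + 1 := by linarith [hm univ]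
    calc _ ≤ ε / (m univ + 1) * m univ := upperIntegral_add_neg_le hm f (by positivity)
      _ ≤ 0 + ε := by
        rw [zero_add, div_mul_eq_mul_div, div_le_iff₀ hmε]
        nlinarith
  · have h0 := stepIntegral_le_upperIntegral hm (f + -f) (c := 0) (by simp)
    have := upperIntegral_add_le hm f (-f)
    rw [map_zero] at h0
    linarith

lemma upperIntegral_smul (hm : ∀ s, 0 ≤ m s) (a : ℝ) (f : M →ᵇ ℝ) :
    upperIntegral m ⇑(a • f) = a * upperIntegral m f := by
  wlog ha : 0 ≤ a generalizing a f
  · have := this (-a) (-f) (by linarith)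
    rwa [neg_smul_neg, upperIntegral_neg hm, neg_mul_neg] at this
  refine le_antisymm (upperIntegral_smul_le hm ha f) ?_
  have := upperIntegral_smul_le hm ha (-f)
  rw [smul_neg, upperIntegral_neg hm, upperIntegral_neg hm] at this
  linarith

lemma upperIntegral_one (hm : ∀ s, 0 ≤ m s) : upperIntegral m ⇑(1 : M →ᵇ ℝ) = m univ := by
  have h1 : toStepFun (Finsupp.single univ 1) = ⇑(1 : M →ᵇ ℝ) := by ext; simp
  refine le_antisymm ((upperIntegral_le hm 1 h1.ge).trans_eq ?_)
    ((stepIntegral_le_upperIntegral hm 1 h1.le).trans_eq' ?_) <;> simp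

lemma isLinearMap_upperIntegral (hm : ∀ s, 0 ≤ m s) :
    IsLinearMap ℝ fun f : M →ᵇ ℝ => upperIntegral m f where
  map_add f g := by
    refine le_antisymm (upperIntegral_add_le hm f g) ?_
    have := upperIntegral_add_le hm (-f) (-g)
    rw [← neg_add, upperIntegral_neg hm, upperIntegral_neg hm, upperIntegral_neg hm] at this
    linarith
  map_smul := upperIntegral_smul hm

end UpperIntegral

noncomputable def fiberSum (φ : M → M) (f : M → ℝ) (x : M) : ℝ := ∑ᶠ y ∈ φ ⁻¹' {x}, f y

lemma fiberSum_indicator_of_injOn {φ : M → M} {A : Set M} (hA : InjOn φ A) :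
    fiberSum φ (A.indicator 1) = (φ '' A).indicator (1 : M → ℝ) := by
  ext x
  rw [fiberSum, ← finsum_mem_inter_support]
  by_cases hx : x ∈ φ '' A
  · obtain ⟨a, ha, rfl⟩ := hx
    have hfiber : φ ⁻¹' {φ a} ∩ Function.support (A.indicator (1 : M → ℝ)) = {a} := by
      ext y
      simp only [support_indicator, Function.support_one, inter_univ]
      exact ⟨fun ⟨h, hy⟩ => hA hy ha h, by rintro rfl; exact ⟨rfl, ha⟩⟩
    rw [hfiber, finsum_mem_singleton, indicator_of_mem ha, indicator_of_mem (mem_image_of_mem φ ha),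
      Pi.one_apply, Pi.one_apply]
  · rw [indicator_of_notMem hx]
    refine finsum_mem_eq_zero_of_forall_eq_zero fun y ⟨hy, hyA⟩ => ?_
    exact absurd ⟨y, (Function.mem_support.mp hyA |> mem_of_indicator_ne_zero), hy⟩ hx

section FiberSum

variable {S : Type*} {φ : M → M} {σ : M → S}

lemma mem_image_inter_preimage_iff (hinj : Function.Injective fun x => (φ x, σ x)) {A : Set M}
    {y : M} : φ y ∈ φ '' (A ∩ σ ⁻¹' {σ y}) ↔ y ∈ A :=
  ⟨fun ⟨_, ⟨hzA, hz⟩, h⟩ => hinj (Prod.ext h hz) ▸ hzA, fun hy => ⟨y, ⟨hy, rfl⟩, rfl⟩⟩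

lemma injOn_preimage_singleton_of_injective_prod (hinj : Function.Injective fun x => (φ x, σ x))
    (x : M) : InjOn σ (φ ⁻¹' {x}) :=
  fun _ hy _ hz h => hinj (Prod.ext (hy.trans hz.symm) h)

lemma finite_preimage_singleton_of_injective_prod [Finite S]
    (hinj : Function.Injective fun x => (φ x, σ x)) (x : M) : (φ ⁻¹' {x}).Finite :=
  Finite.of_injOn (mapsTo_univ σ _) (injOn_preimage_singleton_of_injective_prod hinj x) finite_univ

variable [Fintype S]

lemma fiberSum_indicator_eq_sum (hinj : Function.Injective fun x => (φ x, σ x)) (A : Set M)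
    (x : M) : fiberSum φ (A.indicator 1) x = ∑ s, (φ '' (A ∩ σ ⁻¹' {s})).indicator 1 x := by
  classical
  calc fiberSum φ (A.indicator 1) x
      = ∑ᶠ y ∈ φ ⁻¹' {x}, (φ '' (A ∩ σ ⁻¹' {σ y})).indicator (1 : M → ℝ) x := by
        refine finsum_mem_congr rfl fun y (hy : φ y = x) => ?_
        simp only [← hy, indicator_apply, mem_image_inter_preimage_iff hinj, Pi.one_apply]
    _ = ∑ᶠ s ∈ σ '' (φ ⁻¹' {x}), (φ '' (A ∩ σ ⁻¹' {s})).indicator (1 : M → ℝ) x :=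
        (finsum_mem_image (f := fun s => (φ '' (A ∩ σ ⁻¹' {s})).indicator (1 : M → ℝ) x)
          (injOn_preimage_singleton_of_injective_prod hinj x)).symm
    _ = ∑ s, (φ '' (A ∩ σ ⁻¹' {s})).indicator 1 x := by
        refine finsum_mem_eq_sum_of_inter_support_eq _ ?_
        ext s
        simp only [mem_inter_iff, Function.mem_support, Finset.coe_univ, mem_univ, true_and,
          and_iff_right_iff_imp]
        intro h
        obtain ⟨z, ⟨-, hz⟩, rfl⟩ := mem_of_indicator_ne_zero h
        exact ⟨z, rfl, hz⟩

noncomputable def pushStep (φ : M → M) (σ : M → S) : (Set M →₀ ℝ) →ₗ[ℝ] Set M →₀ ℝ :=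
  Finsupp.linearCombination ℝ fun A => ∑ s, Finsupp.single (φ '' (A ∩ σ ⁻¹' {s})) 1

lemma toStepFun_pushStep (hinj : Function.Injective fun x => (φ x, σ x)) (c : Set M →₀ ℝ) :
    toStepFun (pushStep φ σ c) = fiberSum φ (toStepFun c) := by
  ext x
  induction c using Finsupp.induction_linear with
  | zero => simp [fiberSum]
  | add c d hc hd =>
    simp only [map_add, Pi.add_apply, hc, hd, fiberSum]
    rw [finsum_mem_add_distrib (finite_preimage_singleton_of_injective_prod hinj x)]
  | single A r =>
    simp only [pushStep, Finsupp.linearCombination_single, map_smul, map_sum, Pi.smul_apply,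
      Finset.sum_apply, toStepFun_single, one_mul, smul_eq_mul]
    rw [← fiberSum_indicator_eq_sum hinj, fiberSum, fiberSum, mul_finsum_mem]
    simp only [toStepFun_single]

lemma stepIntegral_pushStep {m : AddContent ℝ (univ : Set (Set M))}
    (hinj : Function.Injective fun x => (φ x, σ x)) (hinv : ∀ A, InjOn φ A → m (φ '' A) = m A)
    (c : Set M →₀ ℝ) : stepIntegral m (pushStep φ σ c) = stepIntegral m c := by
  suffices (stepIntegral m).comp (pushStep φ σ) = stepIntegral m from LinearMap.congr_fun this c
  refine Finsupp.lhom_ext fun A r => ?_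
  have hA : m A = ∑ s, m (A ∩ σ ⁻¹' {s}) := by
    have hsplit : A = ⋃ s, A ∩ σ ⁻¹' {s} := by ext; simp
    conv_lhs => rw [hsplit]
    refine addContent_iUnion (fun _ => mem_univ _) ?_ (mem_univ _)
    exact (pairwise_disjoint_fiber σ).mono fun _ _ =>
      Disjoint.mono inter_subset_right inter_subset_right
  have hpiece (s : S) : InjOn φ (A ∩ σ ⁻¹' {s}) := fun x hx y hy h =>
    hinj (Prod.ext h (hx.2.trans hy.2.symm))
  simp [pushStep, hA, hinv _ (hpiece _), Finset.mul_sum]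

variable [TopologicalSpace M] {m : AddContent ℝ (univ : Set (Set M))}

lemma upperIntegral_le_of_eq_fiberSum (hm : ∀ s, 0 ≤ m s)
    (hinj : Function.Injective fun x => (φ x, σ x)) (hinv : ∀ A, InjOn φ A → m (φ '' A) = m A)
    {f g : M →ᵇ ℝ} (hg : ⇑g = fiberSum φ f) : upperIntegral m g ≤ upperIntegral m f := by
  refine le_upperIntegral f fun c hc => ?_
  rw [← stepIntegral_pushStep hinj hinv]
  refine upperIntegral_le hm g fun x => ?_
  have hfin := finite_preimage_singleton_of_injective_prod hinj x
  rw [hg, toStepFun_pushStep hinj, fiberSum, fiberSum, finsum_mem_eq_finite_toFinset_sum _ hfin,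
    finsum_mem_eq_finite_toFinset_sum _ hfin]
  exact Finset.sum_le_sum fun y _ => hc y

lemma upperIntegral_eq_of_eq_fiberSum (hm : ∀ s, 0 ≤ m s)
    (hinj : Function.Injective fun x => (φ x, σ x)) (hinv : ∀ A, InjOn φ A → m (φ '' A) = m A)
    {f g : M →ᵇ ℝ} (hg : ⇑g = fiberSum φ f) : upperIntegral m g = upperIntegral m f := by
  refine le_antisymm (upperIntegral_le_of_eq_fiberSum hm hinj hinv hg) ?_
  have hneg : ⇑(-g) = fiberSum φ ⇑(-f) := by
    ext x
    simp only [BoundedContinuousFunction.coe_neg, Pi.neg_apply, hg, fiberSum]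
    rw [finsum_mem_neg_distrib _ (finite_preimage_singleton_of_injective_prod hinj x)]
  have := upperIntegral_le_of_eq_fiberSum hm hinj hinv hneg
  rw [upperIntegral_neg hm, upperIntegral_neg hm] at this
  linarith

end FiberSum

def MeasureTheory.AddContent.ofDisjointUnion {G : Type*} [AddCommGroup G] (μ : Set M → G)
    (hadd : ∀ A B, Disjoint A B → μ (A ∪ B) = μ A + μ B) : AddContent G (univ : Set (Set M)) :=
  IsSetRing.addContent_of_union μ ⟨mem_univ _, fun _ _ _ _ => mem_univ _, fun _ _ _ _ => mem_univ _⟩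
    (by simpa using hadd ∅ ∅ (disjoint_empty _)) fun _ _ => hadd _ _

noncomputable def indicatorOne [TopologicalSpace M] [DiscreteTopology M] (A : Set M) : M →ᵇ ℝ :=
  .ofNormedAddCommGroupDiscrete (A.indicator 1) 1 fun x => by by_cases hx : x ∈ A <;> simp [hx]

section Indicator

variable [TopologicalSpace M] [DiscreteTopology M]

@[simp]
lemma coe_indicatorOne (A : Set M) : ⇑(indicatorOne A) = A.indicator 1 := rfl

lemma indicatorOne_nonneg (A : Set M) (x : M) : 0 ≤ indicatorOne A x :=
  indicator_nonneg (fun _ _ => zero_le_one) x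

lemma indicatorOne_univ : indicatorOne (univ : Set M) = 1 := by
  ext
  simp

lemma indicatorOne_union {A B : Set M} (h : Disjoint A B) :
    indicatorOne (A ∪ B) = indicatorOne A + indicatorOne B := by
  ext
  simp [indicator_union_of_disjoint h]

lemma indicatorOne_add_compl (A : Set M) : indicatorOne A + indicatorOne Aᶜ = 1 := by
  rw [← indicatorOne_union disjoint_compl_right, union_compl_self, indicatorOne_univ]

end Indicator

lemma exists_injective_prod_stabilizer {G : Type*} [Group G] [MulAction G M] {m₀ : M}
    {gg : M → G} (hgg : ∀ m, gg m • m₀ = m) {ρ : M → G ⧸ MulAction.stabilizer G m₀ → M}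
    (hρ : ∀ (m : M) (g : G), ρ m g = (gg m * g) • m₀) (𝔤 : G ⧸ MulAction.stabilizer G m₀) :
    ∃ σ : M → MulAction.stabilizer G m₀, Function.Injective fun m => (ρ m 𝔤, σ m) := by
  obtain ⟨g, rfl⟩ := QuotientGroup.mk_surjective 𝔤
  refine ⟨fun m => ⟨(gg (ρ m g))⁻¹ * (gg m * g), ?_⟩, fun x y h => ?_⟩
  · rw [MulAction.mem_stabilizer_iff, mul_smul, ← hρ, inv_smul_eq_iff, hgg]
  · simp only [Prod.mk.injEq, Subtype.mk.injEq] at h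
    obtain ⟨hρxy, hσ⟩ := h
    rw [hρxy, mul_left_cancel_iff, mul_left_inj] at hσ
    rw [← hgg x, ← hgg y, hσ]

end

theorem stmt11_general {G M : Type*} [Group G] [MulAction G M]
    (m₀ : M) (gg : M → G) (hgg : ∀ m, gg m • m₀ = m)
    (ρ : M → G ⧸ MulAction.stabilizer G m₀ → M)
    (hρ : ∀ (m : M) (g : G), ρ m (g : G ⧸ MulAction.stabilizer G m₀) = (gg m * g) • m₀)
    [Finite (MulAction.stabilizer G m₀)]
    [TopologicalSpace M] [DiscreteTopology M] :
    (∃ μ : Set M → ℝ,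
      (∀ A : Set M, 0 ≤ μ A ∧ μ A ≤ 1) ∧ μ Set.univ = 1 ∧
      (∀ A B : Set M, Disjoint A B → μ (A ∪ B) = μ A + μ B) ∧
      (∀ (𝔤 : G ⧸ MulAction.stabilizer G m₀) (A : Set M),
        Set.InjOn (fun m => ρ m 𝔤) A → μ ((fun a => ρ a 𝔤) '' A) = μ A))
    ↔
    (∃ ν : BoundedContinuousFunction M ℝ →ₗ[ℝ] ℝ,
      ν 1 = 1 ∧
      (∀ f : BoundedContinuousFunction M ℝ, (∀ m : M, 0 ≤ f m) → 0 ≤ ν f) ∧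
      (∀ (𝔤 : G ⧸ MulAction.stabilizer G m₀) (f g : BoundedContinuousFunction M ℝ),
        (∀ m : M, g m = ∑ᶠ mp ∈ (fun x => ρ x 𝔤) ⁻¹' {m}, f mp) → ν g = ν f)) := by
  constructor
  · rintro ⟨μ, hμ, huniv, hadd, hinv⟩
    let m := AddContent.ofDisjointUnion μ hadd
    have hm : ∀ s, 0 ≤ m s := fun s => (hμ s).1
    refine ⟨(isLinearMap_upperIntegral hm).mk', ?_, fun f hf => ?_, fun 𝔤 f g hg => ?_⟩
    · exact (upperIntegral_one hm).trans huniv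
    · simpa using stepIntegral_le_upperIntegral hm f (c := 0) fun x => by simpa using hf x
    · have := Fintype.ofFinite (MulAction.stabilizer G m₀)
      obtain ⟨σ, hσ⟩ := exists_injective_prod_stabilizer hgg hρ 𝔤
      exact upperIntegral_eq_of_eq_fiberSum hm hσ (hinv 𝔤) (funext hg)
  · rintro ⟨ν, hν1, hνpos, hνinv⟩
    have hν A : 0 ≤ ν (indicatorOne A) := hνpos _ (indicatorOne_nonneg A)
    refine ⟨fun A => ν (indicatorOne A), fun A => ⟨hν A, ?_⟩, by simp [indicatorOne_univ, hν1],
      fun A B hAB => by simp [indicatorOne_union hAB],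
      fun 𝔤 A hA => hνinv 𝔤 _ _ fun x => (congrFun (fiberSum_indicator_of_injOn hA) x).symm⟩
    have := congrArg ν (indicatorOne_add_compl A)
    rw [map_add, hν1] at this
    linarith [hν Aᶜ]

theorem stmt11 {G M : Type*} [Group G] [MulAction G M]
    (htrans : ∀ m mp : M, ∃ g : G, g • m = mp)
    (m₀ : M) (gg : M → G) (hgg : ∀ m, gg m • m₀ = m)
    (ρ : M → G ⧸ MulAction.stabilizer G m₀ → M)
    (hρ : ∀ (m : M) (g : G), ρ m (g : G ⧸ MulAction.stabilizer G m₀) = (gg m * g) • m₀)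
    [Finite (MulAction.stabilizer G m₀)]
    [TopologicalSpace M] [DiscreteTopology M] :
    (∃ μ : Set M → ℝ,
      (∀ A : Set M, 0 ≤ μ A ∧ μ A ≤ 1) ∧ μ Set.univ = 1 ∧
      (∀ A B : Set M, Disjoint A B → μ (A ∪ B) = μ A + μ B) ∧
      (∀ (𝔤 : G ⧸ MulAction.stabilizer G m₀) (A : Set M),
        Set.InjOn (fun m => ρ m 𝔤) A → μ ((fun a => ρ a 𝔤) '' A) = μ A))
    ↔
    (∃ ν : BoundedContinuousFunction M ℝ →ₗ[ℝ] ℝ,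
      ν 1 = 1 ∧
      (∀ f : BoundedContinuousFunction M ℝ, (∀ m : M, 0 ≤ f m) → 0 ≤ ν f) ∧
      (∀ (𝔤 : G ⧸ MulAction.stabilizer G m₀) (f g : BoundedContinuousFunction M ℝ),
        (∀ m : M, g m = ∑ᶠ mp ∈ (fun x => ρ x 𝔤) ⁻¹' {m}, f mp) → ν g = ν f)) :=
  stmt11_general m₀ gg hgg ρ hρ
end

section
/- Let G₀ be finite and let (F_i)_{i∈I} be a net of nonempty finite subsets of M. Then lim_{i∈I} |F_i \ (⇀𝔤)⁻¹(F_i)|/|F_i| = 0 for all 𝔤 ∈ G/G₀ if and only if lim_{i∈I} |(⇀𝔤)⁻¹(F_i) \ F_i|/|F_i| = 0 for all 𝔤 ∈ G/G₀. -/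
/-!
Applying the semi-action of `g` and then that of `(g s)⁻¹`, for a suitable `s ∈ G₀` depending
on the point, returns to the starting point. Hence each of `(⇀g)⁻¹(F) \ F` and `F \ (⇀g)⁻¹(F)`
is covered by the images under `⇀(g s)⁻¹`, `s ∈ G₀`, of the sets of the other kind for the
finitely many elements `(g s)⁻¹`, so its size is at most the sum of their sizes, and smallness
relative to `|F_i|` passes from one kind to the other.
-/

open MulAction Set Filter Topology

section SemiAction

variable {G M : Type*} [Group G] [MulAction G M] {m₀ : M} {gg : M → G}

/-- The lift to `G` of the right semi-action: `m ⇀ gG₀ = semiAct m₀ gg g m`. -/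
def semiAct (m₀ : M) (gg : M → G) (g : G) (m : M) : M := (gg m * g) • m₀

theorem exists_semiAct_inv_semiAct (hgg : ∀ m, gg m • m₀ = m) (g : G) (m : M) :
    ∃ s : stabilizer G m₀, semiAct m₀ gg (g * s)⁻¹ (semiAct m₀ gg g m) = m := by
  set n := semiAct m₀ gg g m with hn
  have hs : (gg m * g)⁻¹ * gg n ∈ stabilizer G m₀ := by
    rw [mem_stabilizer_iff, mul_smul, hgg n, hn, semiAct, inv_smul_smul]
  refine ⟨⟨_, hs⟩, ?_⟩
  change (gg n * (g * ((gg m * g)⁻¹ * gg n))⁻¹) • m₀ = m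
  rw [show gg n * (g * ((gg m * g)⁻¹ * gg n))⁻¹ = gg m by group, hgg]

theorem preimage_semiAct_inter_subset (hgg : ∀ m, gg m • m₀ = m) (g : G) (S T : Set M) :
    semiAct m₀ gg g ⁻¹' S ∩ T ⊆
      ⋃ s : stabilizer G m₀, semiAct m₀ gg (g * s)⁻¹ '' (S ∩ semiAct m₀ gg (g * s)⁻¹ ⁻¹' T) := by
  rintro m ⟨hmS, hmT⟩
  obtain ⟨s, hs⟩ := exists_semiAct_inv_semiAct hgg g m
  exact mem_iUnion.2 ⟨s, _, ⟨hmS, by rwa [mem_preimage, hs]⟩, hs⟩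

theorem Set.Finite.preimage_semiAct [Finite (stabilizer G m₀)] (hgg : ∀ m, gg m • m₀ = m)
    (g : G) {F : Set M} (hF : F.Finite) : (semiAct m₀ gg g ⁻¹' F).Finite := by
  have h := preimage_semiAct_inter_subset hgg g F univ
  rw [inter_univ] at h
  exact (finite_iUnion fun s => (hF.inter_of_left _).image _).subset h

theorem ncard_preimage_semiAct_inter_le [Fintype (stabilizer G m₀)] (hgg : ∀ m, gg m • m₀ = m)
    (g : G) (S T : Set M)
    (hfin : ∀ s : stabilizer G m₀, (S ∩ semiAct m₀ gg (g * s)⁻¹ ⁻¹' T).Finite) :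
    (semiAct m₀ gg g ⁻¹' S ∩ T).ncard ≤
      ∑ s : stabilizer G m₀, (S ∩ semiAct m₀ gg (g * s)⁻¹ ⁻¹' T).ncard := by
  set B : stabilizer G m₀ → Set M := fun s => S ∩ semiAct m₀ gg (g * s)⁻¹ ⁻¹' T
  calc (semiAct m₀ gg g ⁻¹' S ∩ T).ncard
      ≤ (⋃ s : stabilizer G m₀, semiAct m₀ gg (g * s)⁻¹ '' B s).ncard :=
        ncard_le_ncard (preimage_semiAct_inter_subset hgg g S T)
          (finite_iUnion fun s => (hfin s).image _)
    _ ≤ ∑ s : stabilizer G m₀, (semiAct m₀ gg (g * s)⁻¹ '' B s).ncard :=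
        ncard_iUnion_le_of_fintype _
    _ ≤ ∑ s, (B s).ncard := Finset.sum_le_sum fun s _ => ncard_image_le (hfin s)

theorem ncard_preimage_semiAct_diff_le [Fintype (stabilizer G m₀)] (hgg : ∀ m, gg m • m₀ = m)
    (g : G) {F : Set M} (hF : F.Finite) :
    (semiAct m₀ gg g ⁻¹' F \ F).ncard ≤
      ∑ s : stabilizer G m₀, (F \ semiAct m₀ gg (g * s)⁻¹ ⁻¹' F).ncard :=
  ncard_preimage_semiAct_inter_le hgg g F Fᶜ fun _ => hF.sdiff

theorem ncard_diff_preimage_semiAct_le [Fintype (stabilizer G m₀)] (hgg : ∀ m, gg m • m₀ = m)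
    (g : G) {F : Set M} (hF : F.Finite) :
    (F \ semiAct m₀ gg g ⁻¹' F).ncard ≤
      ∑ s : stabilizer G m₀, (semiAct m₀ gg (g * s)⁻¹ ⁻¹' F \ F).ncard := by
  simpa only [sdiff_eq_compl_inter, preimage_compl] using
    ncard_preimage_semiAct_inter_le hgg g Fᶜ F fun s =>
      (hF.preimage_semiAct hgg _).inter_of_right _

end SemiAction

section Tail

variable {I : Type*} {r : I → I → Prop}

def tailFilter (r : I → I → Prop) : Filter I := ⨅ i₀, 𝓟 {i | r i₀ i}

theorem tailFilter_hasBasis [Nonempty I] (htr : Transitive r)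
    (hdir : ∀ i j : I, ∃ k : I, r i k ∧ r j k) :
    (tailFilter r).HasBasis (fun _ => True) fun i₀ => {i | r i₀ i} :=
  hasBasis_iInf_principal fun i j =>
    let ⟨k, hik, hjk⟩ := hdir i j
    ⟨k, fun _ hx => htr hik hx, fun _ hx => htr hjk hx⟩

theorem tendsto_tailFilter_nhds_zero_iff [Nonempty I] (htr : Transitive r)
    (hdir : ∀ i j : I, ∃ k : I, r i k ∧ r j k) {x : I → ℝ} (hx : ∀ i, 0 ≤ x i) :
    Tendsto x (tailFilter r) (𝓝 0) ↔ ∀ ε > 0, ∃ i₀, ∀ i, r i₀ i → x i < ε := by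
  simp [(tailFilter_hasBasis htr hdir).tendsto_iff Metric.nhds_basis_ball, abs_of_nonneg (hx _)]

theorem tail_div_lt_of_le_sum [Nonempty I] (htr : Transitive r)
    (hdir : ∀ i j : I, ∃ k : I, r i k ∧ r j k) {ι : Type*} (s : Finset ι) {a d : I → ℕ}
    {b : ι → I → ℕ} (hab : ∀ i, a i ≤ ∑ t ∈ s, b t i)
    (hb : ∀ t ∈ s, ∀ ε > 0, ∃ i₀, ∀ i, r i₀ i → (b t i : ℝ) / d i < ε) :
    ∀ ε > 0, ∃ i₀, ∀ i, r i₀ i → (a i : ℝ) / d i < ε := by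
  have hlim (t) (ht : t ∈ s) := (tendsto_tailFilter_nhds_zero_iff htr hdir
    fun i => by positivity).2 (hb t ht)
  refine (tendsto_tailFilter_nhds_zero_iff htr hdir fun i => by positivity).1
    (squeeze_zero (fun i => by positivity) (fun i => ?_)
      (by simpa using tendsto_finsetSum s hlim))
  rw [← Finset.sum_div]
  gcongr
  exact_mod_cast hab i

end Tail

theorem stmt12_general {G M : Type*} [Group G] [MulAction G M]
    (m₀ : M) (gg : M → G) (hgg : ∀ m, gg m • m₀ = m)
    (ρ : M → G ⧸ MulAction.stabilizer G m₀ → M)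
    (hρ : ∀ (m : M) (g : G), ρ m (g : G ⧸ MulAction.stabilizer G m₀) = (gg m * g) • m₀)
    [Finite (MulAction.stabilizer G m₀)]
    {I : Type*} (r : I → I → Prop) (htr : Transitive r)
    (hdir : ∀ i j : I, ∃ k : I, r i k ∧ r j k) [Nonempty I]
    (F : I → Set M) (hFfin : ∀ i, (F i).Finite) :
    (∀ 𝔤 : G ⧸ MulAction.stabilizer G m₀, ∀ ε > (0 : ℝ), ∃ i₀ : I, ∀ i : I, r i₀ i →
      ((F i \ (fun m => ρ m 𝔤) ⁻¹' (F i)).ncard : ℝ) / (F i).ncard < ε)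
    ↔
    (∀ 𝔤 : G ⧸ MulAction.stabilizer G m₀, ∀ ε > (0 : ℝ), ∃ i₀ : I, ∀ i : I, r i₀ i →
      (((fun m => ρ m 𝔤) ⁻¹' (F i) \ F i).ncard : ℝ) / (F i).ncard < ε) := by
  have := Fintype.ofFinite (stabilizer G m₀)
  have hρ_eq : ∀ g : G, (fun m => ρ m g) = semiAct m₀ gg g := fun g => funext fun m => hρ m g
  simp only [QuotientGroup.mk_surjective.forall, hρ_eq]
  exact ⟨fun h g => tail_div_lt_of_le_sum htr hdir Finset.univ
      (fun i => ncard_preimage_semiAct_diff_le hgg g (hFfin i)) fun s _ => h (g * s)⁻¹,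
    fun h g => tail_div_lt_of_le_sum htr hdir Finset.univ
      (fun i => ncard_diff_preimage_semiAct_le hgg g (hFfin i)) fun s _ => h (g * s)⁻¹⟩

theorem stmt12 {G M : Type*} [Group G] [MulAction G M]
    (htrans : ∀ m mp : M, ∃ g : G, g • m = mp)
    (m₀ : M) (gg : M → G) (hgg : ∀ m, gg m • m₀ = m)
    (ρ : M → G ⧸ MulAction.stabilizer G m₀ → M)
    (hρ : ∀ (m : M) (g : G), ρ m (g : G ⧸ MulAction.stabilizer G m₀) = (gg m * g) • m₀)
    [Finite (MulAction.stabilizer G m₀)]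
    {I : Type*} (r : I → I → Prop) (hrefl : Reflexive r) (htr : Transitive r)
    (hdir : ∀ i j : I, ∃ k : I, r i k ∧ r j k) [Nonempty I]
    (F : I → Set M) (hFne : ∀ i, (F i).Nonempty) (hFfin : ∀ i, (F i).Finite) :
    (∀ 𝔤 : G ⧸ MulAction.stabilizer G m₀, ∀ ε > (0 : ℝ), ∃ i₀ : I, ∀ i : I, r i₀ i →
      ((F i \ (fun m => ρ m 𝔤) ⁻¹' (F i)).ncard : ℝ) / (F i).ncard < ε)
    ↔
    (∀ 𝔤 : G ⧸ MulAction.stabilizer G m₀, ∀ ε > (0 : ℝ), ∃ i₀ : I, ∀ i : I, r i₀ i →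
      (((fun m => ρ m 𝔤) ⁻¹' (F i) \ F i).ncard : ℝ) / (F i).ncard < ε) :=
  stmt12_general m₀ gg hgg ρ hρ r htr hdir F hFfin
end

section
/- Let G₀ be finite and suppose there exists a right paradoxical decomposition of the cell space: a finite subset E of G/G₀ and families (A_e)_{e∈E}, (B_e)_{e∈E} of subsets of M such that for each e the map ⇀e is injective on A_e and on B_e, and M = ⨆_{e∈E} A_e = ⨆_{e∈E} B_e = (⨆_{e∈E} A_e ⇀ e) ⊔ (⨆_{e∈E} B_e ⇀ e) (all unions disjoint). Then there is no finitely additive probability measure μ on 𝒫(M) with μ(A ⇀ 𝔤) = μ(A) for all 𝔤 and all A on which ⇀𝔤 is injective. -/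
/-!
Summing μ over the pieces of a paradoxical decomposition: the `A e` tile `M`, so by finite
additivity and semi-invariance the translates `A e ⇀ e` carry total mass `1`; the same holds for
the `B e ⇀ e`, and these two disjoint families together tile `M`, whence `1 = 1 + 1`.
-/

section FinitelyAdditive

variable {M : Type*} {μ : Set M → ℝ}

theorem additive_empty_eq_zero (hadd : ∀ S T : Set M, Disjoint S T → μ (S ∪ T) = μ S + μ T) :
    μ ∅ = 0 := by
  have h := hadd ∅ ∅ disjoint_bot_left
  rw [Set.empty_union] at h
  linarith

theorem additive_biUnion_finset {ι : Type*}
    (hadd : ∀ S T : Set M, Disjoint S T → μ (S ∪ T) = μ S + μ T)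
    (E : Finset ι) (f : ι → Set M) (hf : (E : Set ι).PairwiseDisjoint f) :
    μ (⋃ e ∈ E, f e) = ∑ e ∈ E, μ (f e) := by
  classical
  induction E using Finset.induction_on with
  | empty => simpa using additive_empty_eq_zero hadd
  | insert a s ha ih =>
    rw [Finset.coe_insert, Set.pairwiseDisjoint_insert_of_notMem (by simpa using ha)] at hf
    have hdisj : Disjoint (f a) (⋃ e ∈ s, f e) :=
      Set.disjoint_iUnion₂_right.2 fun e he => hf.2 e he
    rw [Finset.set_biUnion_insert, hadd _ _ hdisj, ih hf.1, Finset.sum_insert ha]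

end FinitelyAdditive

section Paradoxical

variable {M ι : Type*} {μ : Set M → ℝ} {ρ : M → ι → M} {E : Finset ι}

theorem additive_biUnion_image_eq_one_of_tiling
    (huniv : μ Set.univ = 1)
    (hadd : ∀ S T : Set M, Disjoint S T → μ (S ∪ T) = μ S + μ T)
    (hsemi : ∀ (e : ι) (S : Set M), Set.InjOn (fun m => ρ m e) S →
      μ ((fun a => ρ a e) '' S) = μ S)
    {C : ι → Set M} (hinj : ∀ e ∈ E, Set.InjOn (fun m => ρ m e) (C e))
    (hcov : (⋃ e ∈ E, C e) = Set.univ) (hdis : (E : Set ι).PairwiseDisjoint C)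
    (hIdis : (E : Set ι).PairwiseDisjoint fun e => (fun a => ρ a e) '' C e) :
    μ (⋃ e ∈ E, (fun a => ρ a e) '' C e) = 1 := by
  rw [additive_biUnion_finset hadd E _ hIdis,
    Finset.sum_congr rfl fun e he => hsemi e (C e) (hinj e he),
    ← additive_biUnion_finset hadd E C hdis, hcov, huniv]

theorem not_exists_semiInvariant_mean_of_paradoxical
    (A B : ι → Set M)
    (hinj : ∀ e ∈ E, Set.InjOn (fun m => ρ m e) (A e) ∧ Set.InjOn (fun m => ρ m e) (B e))
    (hAcov : (⋃ e ∈ E, A e) = Set.univ) (hAdis : (E : Set ι).PairwiseDisjoint A)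
    (hBcov : (⋃ e ∈ E, B e) = Set.univ) (hBdis : (E : Set ι).PairwiseDisjoint B)
    (hIcov : ((⋃ e ∈ E, (fun a => ρ a e) '' A e) ∪ (⋃ e ∈ E, (fun a => ρ a e) '' B e))
      = Set.univ)
    (hIAdis : (E : Set ι).PairwiseDisjoint fun e => (fun a => ρ a e) '' A e)
    (hIBdis : (E : Set ι).PairwiseDisjoint fun e => (fun a => ρ a e) '' B e)
    (hcross : Disjoint (⋃ e ∈ E, (fun a => ρ a e) '' A e)
      (⋃ e ∈ E, (fun a => ρ a e) '' B e)) :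
    ¬ ∃ μ : Set M → ℝ, μ Set.univ = 1 ∧
      (∀ S T : Set M, Disjoint S T → μ (S ∪ T) = μ S + μ T) ∧
      (∀ (e : ι) (S : Set M), Set.InjOn (fun m => ρ m e) S →
        μ ((fun a => ρ a e) '' S) = μ S) := by
  rintro ⟨μ, huniv, hadd, hsemi⟩
  have hA := additive_biUnion_image_eq_one_of_tiling huniv hadd hsemi
    (fun e he => (hinj e he).1) hAcov hAdis hIAdis
  have hB := additive_biUnion_image_eq_one_of_tiling huniv hadd hsemi
    (fun e he => (hinj e he).2) hBcov hBdis hIBdis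
  have h := hadd _ _ hcross
  rw [hIcov, huniv, hA, hB] at h
  norm_num at h

end Paradoxical

theorem stmt15_general {G M : Type*} [Group G] [MulAction G M]
    (m₀ : M)
    (ρ : M → G ⧸ MulAction.stabilizer G m₀ → M)
    (E : Finset (G ⧸ MulAction.stabilizer G m₀))
    (A B : G ⧸ MulAction.stabilizer G m₀ → Set M)
    (hinj : ∀ e ∈ E, Set.InjOn (fun m => ρ m e) (A e) ∧ Set.InjOn (fun m => ρ m e) (B e))
    (hAcov : (⋃ e ∈ E, A e) = Set.univ)
    (hAdis : (E : Set (G ⧸ MulAction.stabilizer G m₀)).PairwiseDisjoint A)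
    (hBcov : (⋃ e ∈ E, B e) = Set.univ)
    (hBdis : (E : Set (G ⧸ MulAction.stabilizer G m₀)).PairwiseDisjoint B)
    (hIcov : ((⋃ e ∈ E, (fun a => ρ a e) '' A e) ∪ (⋃ e ∈ E, (fun a => ρ a e) '' B e))
      = Set.univ)
    (hIAdis : (E : Set (G ⧸ MulAction.stabilizer G m₀)).PairwiseDisjoint
      (fun e => (fun a => ρ a e) '' A e))
    (hIBdis : (E : Set (G ⧸ MulAction.stabilizer G m₀)).PairwiseDisjoint
      (fun e => (fun a => ρ a e) '' B e))
    (hcross : Disjoint (⋃ e ∈ E, (fun a => ρ a e) '' A e)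
      (⋃ e ∈ E, (fun a => ρ a e) '' B e)) :
    ¬ ∃ μ : Set M → ℝ,
      (∀ S : Set M, 0 ≤ μ S ∧ μ S ≤ 1) ∧ μ Set.univ = 1 ∧
      (∀ S T : Set M, Disjoint S T → μ (S ∪ T) = μ S + μ T) ∧
      (∀ (𝔤 : G ⧸ MulAction.stabilizer G m₀) (S : Set M),
        Set.InjOn (fun m => ρ m 𝔤) S → μ ((fun a => ρ a 𝔤) '' S) = μ S) := by
  rintro ⟨μ, -, hmean⟩
  exact not_exists_semiInvariant_mean_of_paradoxical A B hinj hAcov hAdis hBcov hBdis hIcov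
    hIAdis hIBdis hcross ⟨μ, hmean⟩

theorem stmt15 {G M : Type*} [Group G] [MulAction G M]
    (htrans : ∀ m mp : M, ∃ g : G, g • m = mp)
    (m₀ : M) (gg : M → G) (hgg : ∀ m, gg m • m₀ = m)
    (ρ : M → G ⧸ MulAction.stabilizer G m₀ → M)
    (hρ : ∀ (m : M) (g : G), ρ m (g : G ⧸ MulAction.stabilizer G m₀) = (gg m * g) • m₀)
    [Finite (MulAction.stabilizer G m₀)]
    (E : Finset (G ⧸ MulAction.stabilizer G m₀))
    (A B : G ⧸ MulAction.stabilizer G m₀ → Set M)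
    (hinj : ∀ e ∈ E, Set.InjOn (fun m => ρ m e) (A e) ∧ Set.InjOn (fun m => ρ m e) (B e))
    (hAcov : (⋃ e ∈ E, A e) = Set.univ)
    (hAdis : (E : Set (G ⧸ MulAction.stabilizer G m₀)).PairwiseDisjoint A)
    (hBcov : (⋃ e ∈ E, B e) = Set.univ)
    (hBdis : (E : Set (G ⧸ MulAction.stabilizer G m₀)).PairwiseDisjoint B)
    (hIcov : ((⋃ e ∈ E, (fun a => ρ a e) '' A e) ∪ (⋃ e ∈ E, (fun a => ρ a e) '' B e))
      = Set.univ)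
    (hIAdis : (E : Set (G ⧸ MulAction.stabilizer G m₀)).PairwiseDisjoint
      (fun e => (fun a => ρ a e) '' A e))
    (hIBdis : (E : Set (G ⧸ MulAction.stabilizer G m₀)).PairwiseDisjoint
      (fun e => (fun a => ρ a e) '' B e))
    (hcross : Disjoint (⋃ e ∈ E, (fun a => ρ a e) '' A e)
      (⋃ e ∈ E, (fun a => ρ a e) '' B e)) :
    ¬ ∃ μ : Set M → ℝ,
      (∀ S : Set M, 0 ≤ μ S ∧ μ S ≤ 1) ∧ μ Set.univ = 1 ∧
      (∀ S T : Set M, Disjoint S T → μ (S ∪ T) = μ S + μ T) ∧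
      (∀ (𝔤 : G ⧸ MulAction.stabilizer G m₀) (S : Set M),
        Set.InjOn (fun m => ρ m 𝔤) S → μ ((fun a => ρ a 𝔤) '' S) = μ S) :=
  stmt15_general m₀ ρ E A B hinj hAcov hAdis hBcov hBdis hIcov hIAdis hIBdis hcross
end

section
/- Let G₀ be finite and suppose there is a finite subset E of G/G₀ with G₀ ∈ E such that |F ⇀ E| ≥ 2|F| for every finite subset F of M. Then there exists a 2-to-1 surjective map φ : M → M and a finite subset E' of G/G₀ such that for every m ∈ M there is e ∈ E' with φ(m) ⇀ e = m. -/
/-!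
Hall's harem theorem turns the expansion bound `2|F| ≤ |F ⇀ E|` into an injection
`M × Bool → M` sending `(m, i)` into `m ⇀ E`. Since `G₀ ∈ E`, the map `m ↦ (m, false)` is an
injection backwards along the same bipartite graph, so the relational Schröder–Bernstein theorem
upgrades the injection to a bijection `e : M × Bool ≃ M` along the graph, and
`φ := Prod.fst ∘ e.symm` is 2-to-1 with `φ m ⇀ E ∋ m`.
-/

open Function Finset

section Harem

variable {α β ι : Type*} [Fintype ι]

theorem Finset.exists_injective_prod_mem_of_card_mul_le [DecidableEq β] (t : α → Finset β)
    (ht : ∀ s : Finset α, Fintype.card ι * #s ≤ #(s.biUnion t)) :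
    ∃ f : α × ι → β, Injective f ∧ ∀ x, f x ∈ t x.1 := by
  classical
  refine (all_card_le_biUnion_card_iff_exists_injective (t ∘ Prod.fst)).1 fun s => ?_
  have hfibre : ∀ a ∈ s.image Prod.fst, #{x ∈ s | x.1 = a} ≤ Fintype.card ι := fun a _ =>
    card_le_card_of_injOn Prod.snd (fun _ _ => mem_univ _) fun x hx y hy hxy =>
      Prod.ext (((mem_filter.1 hx).2).trans ((mem_filter.1 hy).2).symm) hxy
  calc #s ≤ Fintype.card ι * #(s.image Prod.fst) := card_le_mul_card_image s _ hfibre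
    _ ≤ #((s.image Prod.fst).biUnion t) := ht _
    _ = #(s.biUnion (t ∘ Prod.fst)) := by rw [image_biUnion]; rfl

theorem Finset.exists_equiv_prod_mem_of_card_mul_le [Nonempty ι] [DecidableEq α]
    (t : α → Finset α) (h_mem : ∀ a, a ∈ t a)
    (ht : ∀ s : Finset α, Fintype.card ι * #s ≤ #(s.biUnion t)) :
    ∃ e : α × ι ≃ α, ∀ x, e x ∈ t x.1 := by
  obtain ⟨f, hf, hft⟩ := exists_injective_prod_mem_of_card_mul_le t ht
  let i : ι := Classical.arbitrary ι
  obtain ⟨h, hh, hht⟩ := Embedding.schroeder_bernstein_of_rel hf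
    (g := fun a => (a, i)) (fun _ _ hab => congrArg Prod.fst hab) (fun x a => a ∈ t x.1) hft h_mem
  exact ⟨Equiv.ofBijective h hh, hht⟩

end Harem

theorem Equiv.ncard_preimage_fst_symm {α β ι : Type*} (e : α × ι ≃ β) (a : α) :
    ((Prod.fst ∘ e.symm) ⁻¹' {a}).ncard = Nat.card ι := by
  rw [Set.preimage_comp, Set.ncard_preimage_of_injective_subset_range e.symm.injective
    (by simp), Set.preimage_fst_singleton_eq_range]
  exact Set.ncard_range_of_injective (Prod.mk_right_injective a)

theorem stmt16_general {G M : Type*} [Group G] [MulAction G M]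
    (m₀ : M) (gg : M → G) (hgg : ∀ m, gg m • m₀ = m)
    (ρ : M → G ⧸ MulAction.stabilizer G m₀ → M)
    (hρ : ∀ (m : M) (g : G), ρ m (g : G ⧸ MulAction.stabilizer G m₀) = (gg m * g) • m₀)
    (E : Finset (G ⧸ MulAction.stabilizer G m₀))
    (hE1 : ((1 : G) : G ⧸ MulAction.stabilizer G m₀) ∈ E)
    (hE2 : ∀ F : Set M, F.Finite →
      2 * F.ncard ≤ (Set.image2 ρ F (E : Set (G ⧸ MulAction.stabilizer G m₀))).ncard) :
    ∃ (φ : M → M) (E' : Finset (G ⧸ MulAction.stabilizer G m₀)),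
      Function.Surjective φ ∧ (∀ m : M, (φ ⁻¹' {m}).ncard = 2) ∧
      ∀ m : M, ∃ e ∈ E', ρ (φ m) e = m := by
  classical
  have hρ_one : ∀ m, ρ m ((1 : G) : G ⧸ MulAction.stabilizer G m₀) = m := fun m => by
    rw [hρ, mul_one, hgg]
  obtain ⟨e, he⟩ := exists_equiv_prod_mem_of_card_mul_le (ι := Bool) (fun m => E.image (ρ m))
    (fun m => mem_image.2 ⟨_, hE1, hρ_one m⟩) fun s => by
      simpa [biUnion_image_left, ← Set.ncard_coe_finset, coe_image₂] using hE2 s s.finite_toSet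
  refine ⟨Prod.fst ∘ e.symm, E, Prod.fst_surjective.comp e.symm.surjective, fun m => ?_,
    fun m => ?_⟩
  · rw [e.ncard_preimage_fst_symm, Nat.card_eq_fintype_card, Fintype.card_bool]
  · simpa using he (e.symm m)

theorem stmt16 {G M : Type*} [Group G] [MulAction G M]
    (htrans : ∀ m mp : M, ∃ g : G, g • m = mp)
    (m₀ : M) (gg : M → G) (hgg : ∀ m, gg m • m₀ = m)
    (ρ : M → G ⧸ MulAction.stabilizer G m₀ → M)
    (hρ : ∀ (m : M) (g : G), ρ m (g : G ⧸ MulAction.stabilizer G m₀) = (gg m * g) • m₀)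
    [Finite (MulAction.stabilizer G m₀)]
    (E : Finset (G ⧸ MulAction.stabilizer G m₀))
    (hE1 : ((1 : G) : G ⧸ MulAction.stabilizer G m₀) ∈ E)
    (hE2 : ∀ F : Set M, F.Finite →
      2 * F.ncard ≤ (Set.image2 ρ F (E : Set (G ⧸ MulAction.stabilizer G m₀))).ncard) :
    ∃ (φ : M → M) (E' : Finset (G ⧸ MulAction.stabilizer G m₀)),
      Function.Surjective φ ∧ (∀ m : M, (φ ⁻¹' {m}).ncard = 2) ∧
      ∀ m : M, ∃ e ∈ E', ρ (φ m) e = m :=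
  stmt16_general m₀ gg hgg ρ hρ E hE1 hE2
end

section
/- Let the right semi-action ⇀ be free (for each m ∈ M the map 𝔤 ↦ m ⇀ 𝔤 is injective), and suppose there is a 2-to-1 surjective map φ : M → M and a finite subset E of G/G₀ such that for each m ∈ M there is e ∈ E with φ(m) ⇀ e = m. Then there exists a right paradoxical decomposition: families (A_e)_{e∈E}, (B_e)_{e∈E} of subsets of M with ⇀e injective on A_e and B_e for each e, M = ⨆_e A_e = ⨆_e B_e, and M = (⨆_e A_e ⇀ e) ⊔ (⨆_e B_e ⇀ e). -/
/-!
Choosing the two points of each fibre of `φ` gives two sections `ψ, ψ'` of `φ` whose ranges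
partition `M`. The hypothesis on `E` says that every point `ψ m` is reached from `m` as `ρ m e`
for some `e ∈ E`; sorting the points `m` by such a choice of `e` yields the pieces `A e`, on which
`ρ · e` agrees with the injective map `ψ`. The pieces `A e` are thus sent onto a partition of
`range ψ`, and likewise the pieces `B e` onto a partition of `range ψ'`.
-/

open Set Function

theorem exists_sections_isCompl_range_of_ncard_fiber_eq_two {M : Type*} {φ : M → M}
    (hfib : ∀ m, (φ ⁻¹' {m}).ncard = 2) :
    ∃ ψ ψ' : M → M, LeftInverse φ ψ ∧ LeftInverse φ ψ' ∧ IsCompl (range ψ) (range ψ') := by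
  choose ψ ψ' hne hψψ' using fun m => ncard_eq_two.mp (hfib m)
  have hψ : LeftInverse φ ψ := fun m => by
    simpa using (hψψ' m).ge (mem_insert _ _)
  have hψ' : LeftInverse φ ψ' := fun m => by
    simpa using (hψψ' m).ge (mem_insert_of_mem _ rfl)
  refine ⟨ψ, ψ', hψ, hψ', ?_, ?_⟩
  · rw [disjoint_range_iff]
    intro m m' h
    obtain rfl : m = m' := by simpa only [hψ m, hψ' m'] using congrArg φ h
    exact hne m h
  · rw [codisjoint_iff_le_sup]
    intro x _
    have hx : x ∈ φ ⁻¹' {φ x} := rfl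
    rcases (hψψ' (φ x)).le hx with h | h
    · exact Or.inl ⟨φ x, h.symm⟩
    · exact Or.inr ⟨φ x, h.symm⟩

section PiecewiseSection

variable {M X : Type*} {ρ : M → X → M} {ψ : M → M} {f : M → X}

theorem eqOn_fiber (hf : ∀ m, ρ m (f m) = ψ m) (e : X) :
    EqOn (fun a => ρ a e) ψ (f ⁻¹' {e}) := by
  rintro a rfl
  exact hf a

theorem biUnion_image_fiber_eq_range (hf : ∀ m, ρ m (f m) = ψ m) {E : Set X}
    (hE : ∀ m, f m ∈ E) : ⋃ e ∈ E, (fun a => ρ a e) '' (f ⁻¹' {e}) = range ψ := by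
  simp_rw [(eqOn_fiber hf _).image_eq, ← image_iUnion₂, biUnion_preimage_singleton,
    preimage_eq_univ_iff.mpr (range_subset_iff.mpr hE), image_univ]

theorem pairwiseDisjoint_image_fiber (hf : ∀ m, ρ m (f m) = ψ m) (hψ : Injective ψ)
    (E : Set X) : E.PairwiseDisjoint fun e => (fun a => ρ a e) '' (f ⁻¹' {e}) := by
  intro e _ e' _ hee'
  simp only [onFun, (eqOn_fiber hf _).image_eq]
  exact (disjoint_image_iff hψ).mpr (pairwiseDisjoint_fiber f univ trivial trivial hee')

theorem exists_partition_image_range_of_leftInverse {φ : M → M} (hψ : LeftInverse φ ψ)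
    {E : Set X} (hmatch : ∀ m, ∃ e ∈ E, ρ (φ m) e = m) :
    ∃ A : X → Set M, (∀ e ∈ E, InjOn (fun m => ρ m e) (A e)) ∧ (⋃ e ∈ E, A e) = univ ∧
      E.PairwiseDisjoint A ∧ (⋃ e ∈ E, (fun a => ρ a e) '' A e) = range ψ ∧
      E.PairwiseDisjoint fun e => (fun a => ρ a e) '' A e := by
  choose f hfE hf using fun m => hψ m ▸ hmatch (ψ m)
  refine ⟨fun e => f ⁻¹' {e}, fun e _ => ?_, ?_, pairwiseDisjoint_fiber f E,
    biUnion_image_fiber_eq_range hf hfE, pairwiseDisjoint_image_fiber hf hψ.injective E⟩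
  · exact hψ.injective.injOn.congr (eqOn_fiber hf e).symm
  · rw [biUnion_preimage_singleton, preimage_eq_univ_iff]
    exact range_subset_iff.mpr hfE

end PiecewiseSection

theorem stmt17_general {G M : Type*} [Group G] [MulAction G M]
    (m₀ : M)
    (ρ : M → G ⧸ MulAction.stabilizer G m₀ → M)
    (φ : M → M)
    (hfib : ∀ m : M, (φ ⁻¹' {m}).ncard = 2)
    (E : Finset (G ⧸ MulAction.stabilizer G m₀))
    (hmatch : ∀ m : M, ∃ e ∈ E, ρ (φ m) e = m) :
    ∃ A B : G ⧸ MulAction.stabilizer G m₀ → Set M,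
      (∀ e ∈ E, Set.InjOn (fun m => ρ m e) (A e) ∧ Set.InjOn (fun m => ρ m e) (B e)) ∧
      (⋃ e ∈ E, A e) = Set.univ ∧
      (E : Set (G ⧸ MulAction.stabilizer G m₀)).PairwiseDisjoint A ∧
      (⋃ e ∈ E, B e) = Set.univ ∧
      (E : Set (G ⧸ MulAction.stabilizer G m₀)).PairwiseDisjoint B ∧
      ((⋃ e ∈ E, (fun a => ρ a e) '' A e) ∪ (⋃ e ∈ E, (fun a => ρ a e) '' B e))
        = Set.univ ∧
      (E : Set (G ⧸ MulAction.stabilizer G m₀)).PairwiseDisjoint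
        (fun e => (fun a => ρ a e) '' A e) ∧
      (E : Set (G ⧸ MulAction.stabilizer G m₀)).PairwiseDisjoint
        (fun e => (fun a => ρ a e) '' B e) ∧
      Disjoint (⋃ e ∈ E, (fun a => ρ a e) '' A e)
        (⋃ e ∈ E, (fun a => ρ a e) '' B e) := by
  obtain ⟨ψ, ψ', hψ, hψ', hcompl⟩ := exists_sections_isCompl_range_of_ncard_fiber_eq_two hfib
  obtain ⟨A, hAinj, hAcover, hAdisj, hAimage, hAimdisj⟩ :=
    exists_partition_image_range_of_leftInverse (ρ := ρ) (E := ↑E) hψ hmatch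
  obtain ⟨B, hBinj, hBcover, hBdisj, hBimage, hBimdisj⟩ :=
    exists_partition_image_range_of_leftInverse (ρ := ρ) (E := ↑E) hψ' hmatch
  refine ⟨A, B, fun e he => ⟨hAinj e he, hBinj e he⟩, hAcover, hAdisj, hBcover, hBdisj,
    ?_, hAimdisj, hBimdisj, ?_⟩
  · have hcover := hcompl.sup_eq_top
    rw [← hAimage, ← hBimage] at hcover
    exact hcover
  · have hdisj := hcompl.disjoint
    rw [← hAimage, ← hBimage] at hdisj
    exact hdisj

theorem stmt17 {G M : Type*} [Group G] [MulAction G M]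
    (htrans : ∀ m mp : M, ∃ g : G, g • m = mp)
    (m₀ : M) (gg : M → G) (hgg : ∀ m, gg m • m₀ = m)
    (ρ : M → G ⧸ MulAction.stabilizer G m₀ → M)
    (hρ : ∀ (m : M) (g : G), ρ m (g : G ⧸ MulAction.stabilizer G m₀) = (gg m * g) • m₀)
    (hfree : ∀ m : M, Function.Injective (ρ m))
    (φ : M → M) (hsurj : Function.Surjective φ)
    (hfib : ∀ m : M, (φ ⁻¹' {m}).ncard = 2)
    (E : Finset (G ⧸ MulAction.stabilizer G m₀))
    (hmatch : ∀ m : M, ∃ e ∈ E, ρ (φ m) e = m) :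
    ∃ A B : G ⧸ MulAction.stabilizer G m₀ → Set M,
      (∀ e ∈ E, Set.InjOn (fun m => ρ m e) (A e) ∧ Set.InjOn (fun m => ρ m e) (B e)) ∧
      (⋃ e ∈ E, A e) = Set.univ ∧
      (E : Set (G ⧸ MulAction.stabilizer G m₀)).PairwiseDisjoint A ∧
      (⋃ e ∈ E, B e) = Set.univ ∧
      (E : Set (G ⧸ MulAction.stabilizer G m₀)).PairwiseDisjoint B ∧
      ((⋃ e ∈ E, (fun a => ρ a e) '' A e) ∪ (⋃ e ∈ E, (fun a => ρ a e) '' B e))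
        = Set.univ ∧
      (E : Set (G ⧸ MulAction.stabilizer G m₀)).PairwiseDisjoint
        (fun e => (fun a => ρ a e) '' A e) ∧
      (E : Set (G ⧸ MulAction.stabilizer G m₀)).PairwiseDisjoint
        (fun e => (fun a => ρ a e) '' B e) ∧
      Disjoint (⋃ e ∈ E, (fun a => ρ a e) '' A e)
        (⋃ e ∈ E, (fun a => ρ a e) '' B e) :=
  stmt17_general m₀ ρ φ hfib E hmatch
end

section
/- Let M be a set with a transitive left G-action, H ≤ G with G = G₀H, where G₀ is the stabiliser of m₀ and the restricted action of H on M is free, and suppose the coordinates g_{m₀,m} all lie in the centre Z(H) of H. Then for every g ∈ G the map m ↦ m ⇀ gG₀ is injective, and for every h ∈ H and m ∈ M we have m ⇀ hG₀ = h • m and (m ⇀ hG₀) ⇀ gG₀ = m ⇀ hgG₀. -/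
/-!
Since the coordinates `g_{m₀,m}` lie in `H` and `H` acts freely, an element of `H` is determined
by its value at any single point. Centrality gives `g_{m₀,m} h • m₀ = h g_{m₀,m} • m₀ = h • m`,
so `g_{m₀,h•m} = g_{m₀,m} h`, from which both identities follow; injectivity is freeness at `g • m₀`.
-/

open Function

namespace FreeSubgroupAction

variable {G M : Type*} [Group G] [MulAction G M] {H : Subgroup G}

theorem eq_of_smul_eq (hfree : ∀ m : M, Injective (fun h : H => (h : G) • m))
    {a b : G} (ha : a ∈ H) (hb : b ∈ H) {m : M} (hab : a • m = b • m) : a = b :=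
  congrArg Subtype.val (hfree m (a₁ := ⟨a, ha⟩) (a₂ := ⟨b, hb⟩) hab)

variable {m₀ : M} {gg : M → G}

theorem eq_of_coord_mul_smul_eq (hgg : ∀ m, gg m • m₀ = m)
    (hfree : ∀ m : M, Injective (fun h : H => (h : G) • m)) (hH : ∀ m, gg m ∈ H)
    {m m' : M} (g : G) (hmm' : (gg m * g) • m₀ = (gg m' * g) • m₀) : m = m' := by
  rw [mul_smul, mul_smul] at hmm'
  rw [← hgg m, ← hgg m', eq_of_smul_eq hfree (hH m) (hH m') hmm']

theorem coord_mul_smul_of_commute (hgg : ∀ m, gg m • m₀ = m) {m : M} {h : G}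
    (hc : Commute (gg m) h) : (gg m * h) • m₀ = h • m := by
  rw [hc.eq, mul_smul, hgg]

theorem coord_smul (hgg : ∀ m, gg m • m₀ = m)
    (hfree : ∀ m : M, Injective (fun h : H => (h : G) • m)) (hH : ∀ m, gg m ∈ H)
    (hcomm : ∀ m, ∀ h ∈ H, Commute (gg m) h) {h : G} (hh : h ∈ H) (m : M) :
    gg (h • m) = gg m * h :=
  eq_of_smul_eq hfree (hH _) (mul_mem (hH m) hh) (m := m₀) <| by
    rw [hgg, coord_mul_smul_of_commute hgg (hcomm m h hh)]

end FreeSubgroupAction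

open FreeSubgroupAction in
theorem stmt19_general {G M : Type*} [Group G] [MulAction G M]
    (m₀ : M) (gg : M → G) (hgg : ∀ m, gg m • m₀ = m)
    (ρ : M → G ⧸ MulAction.stabilizer G m₀ → M)
    (hρ : ∀ (m : M) (g : G), ρ m (g : G ⧸ MulAction.stabilizer G m₀) = (gg m * g) • m₀)
    (H : Subgroup G)
    (hfree : ∀ m : M, Function.Injective (fun h : H => (h : G) • m))
    (hZ : ∀ m : M, gg m ∈ H ∧ ∀ h ∈ H, gg m * h = h * gg m) :
    (∀ g : G, Function.Injective
      (fun m => ρ m (g : G ⧸ MulAction.stabilizer G m₀))) ∧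
    (∀ h ∈ H, (∀ m : M, ρ m (h : G ⧸ MulAction.stabilizer G m₀) = h • m) ∧
      ∀ g : G, ∀ m : M,
        ρ (ρ m (h : G ⧸ MulAction.stabilizer G m₀)) (g : G ⧸ MulAction.stabilizer G m₀)
          = ρ m ((h * g : G) : G ⧸ MulAction.stabilizer G m₀)) := by
  have hH : ∀ m, gg m ∈ H := fun m => (hZ m).1
  have hcomm : ∀ m, ∀ h ∈ H, Commute (gg m) h := fun m => (hZ m).2
  refine ⟨fun g m m' hmm' => ?_, fun h hh => ?_⟩
  · simp only [hρ] at hmm'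
    exact eq_of_coord_mul_smul_eq hgg hfree hH g hmm'
  · have hρh : ∀ m, ρ m (h : G ⧸ MulAction.stabilizer G m₀) = h • m := fun m => by
      rw [hρ, coord_mul_smul_of_commute hgg (hcomm m h hh)]
    refine ⟨hρh, fun g m => ?_⟩
    rw [hρh, hρ, hρ, coord_smul hgg hfree hH hcomm hh, mul_assoc]

theorem stmt19 {G M : Type*} [Group G] [MulAction G M]
    (htrans : ∀ m mp : M, ∃ g : G, g • m = mp)
    (m₀ : M) (gg : M → G) (hgg : ∀ m, gg m • m₀ = m)
    (ρ : M → G ⧸ MulAction.stabilizer G m₀ → M)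
    (hρ : ∀ (m : M) (g : G), ρ m (g : G ⧸ MulAction.stabilizer G m₀) = (gg m * g) • m₀)
    (H : Subgroup G)
    (hGH : ∀ g : G, ∃ g₀ ∈ MulAction.stabilizer G m₀, ∃ h ∈ H, g = g₀ * h)
    (hfree : ∀ m : M, Function.Injective (fun h : H => (h : G) • m))
    (hZ : ∀ m : M, gg m ∈ H ∧ ∀ h ∈ H, gg m * h = h * gg m) :
    (∀ g : G, Function.Injective
      (fun m => ρ m (g : G ⧸ MulAction.stabilizer G m₀))) ∧
    (∀ h ∈ H, (∀ m : M, ρ m (h : G ⧸ MulAction.stabilizer G m₀) = h • m) ∧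
      ∀ g : G, ∀ m : M,
        ρ (ρ m (h : G ⧸ MulAction.stabilizer G m₀)) (g : G ⧸ MulAction.stabilizer G m₀)
          = ρ m ((h * g : G) : G ⧸ MulAction.stabilizer G m₀)) :=
  stmt19_general m₀ gg hgg ρ hρ H hfree hZ
end
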